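/- Let L be an n×n symmetric matrix over 𝔽₂ with all diagonal entries equal to 1, and fix an extra unknown a∞. The augmented system aᵢ + ∑_{j≠i} Lᵢⱼ aⱼ + a∞ = 0 (for i = 1,…,n) together with a∞ = 1 always has a solution over 𝔽₂. -/

import Mathlib

/-!
Put `M i j = l i j` off the diagonal and `M i i = 1`; the claim is that the all-ones vector,
the diagonal of the symmetric matrix `M`, lies in the column space of `M`. By the Fredholm
alternative it suffices that `y ⬝ᵥ diag M = 0` for every `y` with `M *ᵥ y = 0`. Over `𝔽₂` the
off-diagonal terms of `y ⬝ᵥ M *ᵥ y` cancel in symmetric pairs and `y i ^ 2 = y i`, so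
`0 = y ⬝ᵥ M *ᵥ y = ∑ i, M i i * y i = y ⬝ᵥ diag M`.
-/

open Matrix

theorem CharTwo.sum_sum_eq_sum_diag {ι R : Type*} [Semiring R] [CharP R 2] (s : Finset ι)
    (f : ι → ι → R) (hf : ∀ i j, f i j = f j i) :
    ∑ i ∈ s, ∑ j ∈ s, f i j = ∑ i ∈ s, f i i := by
  classical
  induction s using Finset.induction_on with
  | empty => simp
  | insert a s ha ih =>
    simp only [Finset.sum_insert ha, Finset.sum_add_distrib, ih, ← hf a]
    rw [add_assoc, ← add_assoc (∑ j ∈ s, f a j), CharTwo.add_self_eq_zero, zero_add]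

theorem Matrix.IsSymm.dotProduct_mulVec_self_of_charTwo {n R : Type*} [Fintype n] [CommSemiring R]
    [CharP R 2] {M : Matrix n n R} (hM : M.IsSymm) (y : n → R) :
    y ⬝ᵥ M *ᵥ y = ∑ i, M i i * y i ^ 2 := by
  simp only [dotProduct, mulVec, Finset.mul_sum]
  rw [CharTwo.sum_sum_eq_sum_diag _ _ fun i j => by rw [hM.apply i j]; ring]
  exact Finset.sum_congr rfl fun i _ => by ring

theorem Matrix.exists_mulVec_eq_of_forall_vecMul_eq_zero {m n K : Type*} [Field K] [Fintype m]
    [Fintype n] (M : Matrix m n K) {v : m → K} (h : ∀ y, y ᵥ* M = 0 → y ⬝ᵥ v = 0) :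
    ∃ x, M *ᵥ x = v := by
  classical
  change v ∈ LinearMap.range M.mulVecLin
  rw [← Subspace.forall_mem_dualAnnihilator_apply_eq_zero_iff]
  intro φ hφ
  obtain ⟨y, rfl⟩ := (dotProductEquiv K m).surjective φ
  refine h y (dotProduct_eq_zero_iff.mp fun x => ?_)
  rw [← dotProduct_mulVec]
  exact (Submodule.mem_dualAnnihilator _).mp hφ _ ⟨x, rfl⟩

theorem Matrix.IsSymm.exists_mulVec_eq_diag {n : Type*} [Fintype n] {M : Matrix n n (ZMod 2)}
    (hM : M.IsSymm) : ∃ x, M *ᵥ x = M.diag := by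
  refine M.exists_mulVec_eq_of_forall_vecMul_eq_zero fun y hy => ?_
  rw [← mulVec_transpose, hM.eq] at hy
  calc y ⬝ᵥ M.diag = ∑ i, M i i * y i ^ 2 := by
        simp only [dotProduct, diag, ZMod.pow_card, mul_comm]
    _ = 0 := by rw [← hM.dotProduct_mulVec_self_of_charTwo, hy, dotProduct_zero]

theorem augmented_system_solvable (n : ℕ) (l : Fin n → Fin n → ZMod 2)
    (hsym : ∀ i j, l i j = l j i) :
    ∃ (a : Fin n → ZMod 2) (aInf : ZMod 2), aInf = 1 ∧
      ∀ i, a i + (∑ j ∈ Finset.univ.filter (fun j => j ≠ i), l i j * a j) + aInf = 0 := by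
  set M : Matrix (Fin n) (Fin n) (ZMod 2) := of fun i j => if i = j then 1 else l i j
  have hM : M.IsSymm := IsSymm.ext fun i j => by
    by_cases h : j = i
    · rw [h]
    · simp [M, h, Ne.symm h, hsym j i]
  obtain ⟨a, ha⟩ := hM.exists_mulVec_eq_diag
  refine ⟨a, 1, rfl, fun i => ?_⟩
  have hrow : a i + ∑ j ∈ Finset.univ.erase i, l i j * a j = 1 := by
    have hi := congrFun ha i
    simp only [mulVec, dotProduct, diag, M, of_apply] at hi
    rw [← Finset.add_sum_erase _ _ (Finset.mem_univ i), if_pos rfl, one_mul] at hi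
    rwa [Finset.sum_congr rfl fun j hj => by rw [if_neg (Finset.ne_of_mem_erase hj).symm]] at hi
  rw [Finset.filter_ne', hrow, CharTwo.add_self_eq_zero]
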